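/- Let u, v, w ∈ V with uw, uv, vw ∈ E. Let U ⊂ V be such that uv, uw ∈ δ(U) and let W ⊂ V be such that uw, vw ∈ δ(W). If θ_{uw} + θ_{uv} ≥ Σ_{e ∈ δ(U) \ {uw, uv}} |θ_e|, θ_{uw} + θ_{vw} ≥ Σ_{e ∈ δ(W) \ {uw, vw}} |θ_e|, and additionally θ_{uw} + θ_{uv} + θ_{vw} ≥ Σ_{e ∈ δ({u,v,w}) ∩ E⁺} θ_e, then there exists an optimal solution x* of the multicut problem min_{x ∈ MC(G)} ⟨θ, x⟩ with x*_{uw} = 0. -/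
import Mathlib

variable {V : Type} [Fintype V] [DecidableEq V]

/-- The set of edges of `G` with one endpoint in `U` and the other in `W` (δ(U, W)). -/
def btw (G : SimpleGraph V) [DecidableRel G.Adj] (U W : Finset V) : Finset (Sym2 V) :=
  G.edgeFinset.filter fun e => ∃ x ∈ U, ∃ y ∈ W, e = s(x, y)

/-- The cut δ(U) := δ(U, V \ U). -/
def cutδ (G : SimpleGraph V) [DecidableRel G.Adj] (U : Finset V) : Finset (Sym2 V) :=
  btw G U Uᶜ

/-- `M` is (the edge set of) a multicut of `G`. -/
def IsMulticut (G : SimpleGraph V) [DecidableRel G.Adj] (M : Finset (Sym2 V)) : Prop :=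
  M ⊆ G.edgeFinset ∧ ∃ f : V → V, ∀ x y, G.Adj x y → (s(x, y) ∈ M ↔ f x ≠ f y)

/-- The multicut induced by a labeling `f`. -/
def mcSet (G : SimpleGraph V) [DecidableRel G.Adj] (f : V → V) : Finset (Sym2 V) :=
  G.edgeFinset.filter fun e =>
    Sym2.lift ⟨fun x y => decide (f x ≠ f y), by
      intro x y; exact decide_eq_decide.2 ne_comm⟩ e = true

lemma mem_mcSet {G : SimpleGraph V} [DecidableRel G.Adj] {f : V → V} {x y : V} :
    s(x, y) ∈ mcSet G f ↔ s(x, y) ∈ G.edgeFinset ∧ f x ≠ f y := by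
  simp [mcSet]

lemma isMulticut_mcSet (G : SimpleGraph V) [DecidableRel G.Adj] (f : V → V) :
    IsMulticut G (mcSet G f) :=
  ⟨Finset.filter_subset _ _, f, fun x y h => by
    simp [mem_mcSet, SimpleGraph.mem_edgeFinset, h]⟩

lemma eq_mcSet {G : SimpleGraph V} [DecidableRel G.Adj] {N : Finset (Sym2 V)} {f : V → V}
    (hsub : N ⊆ G.edgeFinset)
    (hf : ∀ x y, G.Adj x y → (s(x, y) ∈ N ↔ f x ≠ f y)) : N = mcSet G f := by
  ext e
  induction e using Sym2.inductionOn with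
  | hf x y =>
    by_cases hxy : G.Adj x y
    · rw [mem_mcSet, hf x y hxy]
      simp [SimpleGraph.mem_edgeFinset, hxy]
    · constructor
      · intro h
        exact absurd (SimpleGraph.mem_edgeFinset.1 (hsub h)) hxy
      · intro h
        exact absurd (SimpleGraph.mem_edgeFinset.1 (Finset.filter_subset _ _ h)) hxy

lemma mem_cutδ {G : SimpleGraph V} [DecidableRel G.Adj] {U : Finset V} {x y : V} :
    s(x, y) ∈ cutδ G U ↔ s(x, y) ∈ G.edgeFinset ∧ ((x ∈ U ∧ y ∉ U) ∨ (y ∈ U ∧ x ∉ U)) := by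
  simp only [cutδ, _root_.btw, Finset.mem_filter, Finset.mem_compl]
  constructor
  · rintro ⟨he, p, hp, q, hq, h⟩
    refine ⟨he, ?_⟩
    rw [Sym2.eq_iff] at h
    rcases h with ⟨rfl, rfl⟩ | ⟨rfl, rfl⟩
    · exact Or.inl ⟨hp, hq⟩
    · exact Or.inr ⟨hp, hq⟩
  · rintro ⟨he, ⟨hx, hy⟩ | ⟨hy, hx⟩⟩
    · exact ⟨he, x, hx, y, hy, rfl⟩
    · exact ⟨he, y, hy, x, hx, Sym2.eq_swap⟩

lemma cutδ_compl (G : SimpleGraph V) [DecidableRel G.Adj] (U : Finset V) :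
    cutδ G Uᶜ = cutδ G U := by
  ext e
  induction e using Sym2.inductionOn with
  | hf x y =>
    rw [mem_cutδ, mem_cutδ]
    simp only [Finset.mem_compl, not_not]
    tauto

lemma sum_diff_eq {M N C : Finset (Sym2 V)} (θ : Sym2 V → ℝ)
    (h : ∀ e, e ∉ C → (e ∈ M ↔ e ∈ N)) :
    ∑ e ∈ M, θ e - ∑ e ∈ N, θ e = ∑ e ∈ C ∩ M, θ e - ∑ e ∈ C ∩ N, θ e := by
  have hM := Finset.sum_inter_add_sum_sdiff M C θ
  have hN := Finset.sum_inter_add_sum_sdiff N C θ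
  have hd : M \ C = N \ C := by
    ext e
    simp only [Finset.mem_sdiff]
    exact and_congr_left fun he => h e he
  rw [Finset.inter_comm C M, Finset.inter_comm C N]
  rw [hd] at hM
  linarith

lemma inter_sum_sub_le {A B C : Finset (Sym2 V)} (θ g : Sym2 V → ℝ)
    (hg : ∀ e ∈ C, (if e ∈ A then θ e else 0) - (if e ∈ B then θ e else 0) ≤ g e) :
    ∑ e ∈ C ∩ A, θ e - ∑ e ∈ C ∩ B, θ e ≤ ∑ e ∈ C, g e := by
  rw [← Finset.sum_ite_mem C A, ← Finset.sum_ite_mem C B, ← Finset.sum_sub_distrib]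
  exact Finset.sum_le_sum hg

/-- The cut-swap move: uncut the two edges `s(a,b)`, `s(a,c)` of the cut `δ(U)`. -/
lemma move_swap (G : SimpleGraph V) [DecidableRel G.Adj] (θ : Sym2 V → ℝ)
    (f : V → V) (a b c : V) (hab : G.Adj a b) (hac : G.Adj a c) (hbc : b ≠ c)
    (U : Finset V) (haU : a ∈ U) (hbU : b ∉ U) (hcU : c ∉ U)
    (hfbc : f b = f c) (hfab : f a ≠ f b)
    (hsum : ∑ e ∈ cutδ G U \ {s(a, b), s(a, c)}, |θ e| ≤ θ (s(a, b)) + θ (s(a, c))) :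
    ∃ M, IsMulticut G M ∧ (∑ e ∈ M, θ e ≤ ∑ e ∈ mcSet G f, θ e) ∧ s(a, b) ∉ M := by
  set f' : V → V := fun x => if x ∈ U then Equiv.swap (f a) (f b) (f x) else f x with hf'
  have hf'a : f' a = f b := by simp [hf', haU]
  have hf'b : f' b = f b := by simp [hf', hbU]
  have hf'c : f' c = f c := by simp [hf', hcU]
  have habM : s(a, b) ∉ mcSet G f' := by
    rw [mem_mcSet]
    rintro ⟨-, h⟩
    exact h (hf'a.trans hf'b.symm)
  refine ⟨mcSet G f', isMulticut_mcSet G f', ?_, habM⟩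
  set C := cutδ G U with hC
  set M := mcSet G f' with hM
  set N := mcSet G f with hN
  have hne : s(a, b) ≠ s(a, c) := by
    intro h
    rcases Sym2.eq_iff.1 h with ⟨-, h2⟩ | ⟨h1, -⟩
    · exact hbc h2
    · exact hac.ne h1
  have he1C : s(a, b) ∈ C := mem_cutδ.2 ⟨SimpleGraph.mem_edgeFinset.2 hab, Or.inl ⟨haU, hbU⟩⟩
  have he2C : s(a, c) ∈ C := mem_cutδ.2 ⟨SimpleGraph.mem_edgeFinset.2 hac, Or.inl ⟨haU, hcU⟩⟩
  have he1N : s(a, b) ∈ N := mem_mcSet.2 ⟨SimpleGraph.mem_edgeFinset.2 hab, hfab⟩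
  have he2N : s(a, c) ∈ N := mem_mcSet.2 ⟨SimpleGraph.mem_edgeFinset.2 hac, fun h => hfab (h.trans hfbc.symm)⟩
  have he2M : s(a, c) ∉ M := by
    rw [hM, mem_mcSet]
    rintro ⟨-, h⟩
    exact h (by rw [hf'a, hf'c, hfbc])
  -- agreement off C
  have hagree : ∀ e, e ∉ C → (e ∈ M ↔ e ∈ N) := by
    intro e heC
    induction e using Sym2.inductionOn with
    | hf x y =>
      by_cases hxy : G.Adj x y
      · have hedge : s(x, y) ∈ G.edgeFinset := SimpleGraph.mem_edgeFinset.2 hxy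
        rw [hM, hN, mem_mcSet, mem_mcSet]
        by_cases hx : x ∈ U <;> by_cases hy : y ∈ U
        · simp only [hf', hx, hy, if_pos]
          exact and_congr_right fun _ => (Equiv.swap (f a) (f b)).injective.ne_iff
        · exact absurd (mem_cutδ.2 ⟨hedge, Or.inl ⟨hx, hy⟩⟩) heC
        · exact absurd (mem_cutδ.2 ⟨hedge, Or.inr ⟨hy, hx⟩⟩) heC
        · simp only [hf', hx, hy, if_neg, ite_false]
      · constructor
        · intro h
          exact absurd (SimpleGraph.mem_edgeFinset.1 (Finset.filter_subset _ _ h)) hxy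
        · intro h
          exact absurd (SimpleGraph.mem_edgeFinset.1 (Finset.filter_subset _ _ h)) hxy
  set C' := C \ {s(a, b), s(a, c)} with hC'
  have hCM : C ∩ M = C' ∩ M := by
    ext e
    simp only [hC', Finset.mem_inter, Finset.mem_sdiff, Finset.mem_insert, Finset.mem_singleton]
    constructor
    · rintro ⟨heC2, heM⟩
      refine ⟨⟨heC2, ?_⟩, heM⟩
      rintro (rfl | rfl)
      · exact habM heM
      · exact he2M heM
    · rintro ⟨⟨heC2, -⟩, heM⟩
      exact ⟨heC2, heM⟩
  have hCN : C ∩ N = insert (s(a, b)) (insert (s(a, c)) (C' ∩ N)) := by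
    ext e
    simp only [hC', Finset.mem_inter, Finset.mem_sdiff, Finset.mem_insert, Finset.mem_singleton]
    constructor
    · rintro ⟨heC2, heN⟩
      by_cases h1 : e = s(a, b)
      · exact Or.inl h1
      by_cases h2 : e = s(a, c)
      · exact Or.inr (Or.inl h2)
      · exact Or.inr (Or.inr ⟨⟨heC2, by tauto⟩, heN⟩)
    · rintro (rfl | rfl | ⟨⟨heC2, -⟩, heN⟩)
      · exact ⟨he1C, he1N⟩
      · exact ⟨he2C, he2N⟩
      · exact ⟨heC2, heN⟩
  have hsumN : ∑ e ∈ C ∩ N, θ e = θ (s(a, b)) + θ (s(a, c)) + ∑ e ∈ C' ∩ N, θ e := by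
    rw [hCN, Finset.sum_insert, Finset.sum_insert]
    · ring
    · simp only [Finset.mem_inter, hC', Finset.mem_sdiff, Finset.mem_insert, Finset.mem_singleton]
      tauto
    · simp only [Finset.mem_insert, Finset.mem_inter, hC', Finset.mem_sdiff,
        Finset.mem_singleton]
      push_neg
      exact ⟨hne, by tauto⟩
  have hbound : ∑ e ∈ C' ∩ M, θ e - ∑ e ∈ C' ∩ N, θ e ≤ ∑ e ∈ C', |θ e| := by
    apply inter_sum_sub_le
    intro e _
    split_ifs <;> simp [le_abs_self, neg_abs_le, abs_nonneg, neg_le_abs]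
  have hkey := sum_diff_eq (M := M) (N := N) (C := C) θ hagree
  rw [hCM, hsumN] at hkey
  have : ∑ e ∈ M, θ e - ∑ e ∈ N, θ e ≤ 0 := by
    rw [hkey]; linarith [hbound, hsum]
  linarith

/-- The triangle-merge move. -/
lemma move_merge (G : SimpleGraph V) [DecidableRel G.Adj] (θ : Sym2 V → ℝ)
    (f : V → V) (u v w : V) (huw : G.Adj u w) (huv : G.Adj u v) (hvw : G.Adj v w)
    (hfuv : f u ≠ f v) (hfuw : f u ≠ f w) (hfvw : f v ≠ f w)
    (h3 : ∑ e ∈ (cutδ G {u, v, w}).filter (fun e => 0 ≤ θ e), θ e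
            ≤ θ (s(u, w)) + θ (s(u, v)) + θ (s(v, w))) :
    ∃ M, IsMulticut G M ∧ (∑ e ∈ M, θ e ≤ ∑ e ∈ mcSet G f, θ e) ∧ s(u, w) ∉ M := by
  set T : Finset V := {u, v, w} with hT
  have huvne : u ≠ v := huv.ne
  have huwne : u ≠ w := huw.ne
  have hvwne : v ≠ w := hvw.ne
  have hcardT : T.card = 3 := by
    rw [hT]
    rw [Finset.card_insert_of_notMem (by simp [huvne, huwne]),
      Finset.card_insert_of_notMem (by simp [hvwne]), Finset.card_singleton]
  obtain ⟨c₀, hc₀⟩ : ∃ c₀, c₀ ∉ (Tᶜ).image f := by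
    by_contra h
    push_neg at h
    have heq : (Tᶜ).image f = Finset.univ := Finset.eq_univ_of_forall h
    have h1 : ((Tᶜ).image f).card ≤ (Tᶜ).card := Finset.card_image_le
    rw [heq, Finset.card_univ, Finset.card_compl, hcardT] at h1
    have h2 : T.card ≤ Fintype.card V := by
      rw [← Finset.card_univ]; exact Finset.card_le_card (Finset.subset_univ T)
    omega
  have hfresh : ∀ x, x ∉ T → f x ≠ c₀ := fun x hx h =>
    hc₀ (h ▸ Finset.mem_image_of_mem f (Finset.mem_compl.2 hx))
  set f' : V → V := fun x => if x ∈ T then c₀ else f x with hf'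
  have huT : u ∈ T := by simp [hT]
  have hvT : v ∈ T := by simp [hT]
  have hwT : w ∈ T := by simp [hT]
  have hf'u : f' u = c₀ := by simp [hf', huT]
  have hf'v : f' v = c₀ := by simp [hf', hvT]
  have hf'w : f' w = c₀ := by simp [hf', hwT]
  set M := mcSet G f' with hM
  set N := mcSet G f with hN
  have huwM : s(u, w) ∉ M := by
    rw [hM, mem_mcSet]
    rintro ⟨-, h⟩
    exact h (hf'u.trans hf'w.symm)
  have huvM : s(u, v) ∉ M := by
    rw [hM, mem_mcSet]
    rintro ⟨-, h⟩
    exact h (hf'u.trans hf'v.symm)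
  have hvwM : s(v, w) ∉ M := by
    rw [hM, mem_mcSet]
    rintro ⟨-, h⟩
    exact h (hf'v.trans hf'w.symm)
  refine ⟨M, isMulticut_mcSet G f', ?_, huwM⟩
  set C := cutδ G T with hC
  set TE : Finset (Sym2 V) := {s(u, v), s(u, w), s(v, w)} with hTE
  set D := C ∪ TE with hD
  -- triangle edges are not in the cut
  have hTEC : ∀ e ∈ TE, e ∉ C := by
    intro e he heC
    simp only [hTE, Finset.mem_insert, Finset.mem_singleton] at he
    rcases he with rfl | rfl | rfl <;>
    · rcases (mem_cutδ.1 heC).2 with ⟨h1, h2⟩ | ⟨h1, h2⟩ <;> simp [hT] at h1 h2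
  -- agreement off D
  have hagree : ∀ e, e ∉ D → (e ∈ M ↔ e ∈ N) := by
    intro e heD
    induction e using Sym2.inductionOn with
    | hf x y =>
      by_cases hxy : G.Adj x y
      · have hedge : s(x, y) ∈ G.edgeFinset := SimpleGraph.mem_edgeFinset.2 hxy
        rw [hM, hN, mem_mcSet, mem_mcSet]
        by_cases hx : x ∈ T <;> by_cases hy : y ∈ T
        · exfalso
          apply heD
          apply Finset.mem_union_right
          simp only [hT, Finset.mem_insert, Finset.mem_singleton] at hx hy
          have m1 : s(u, v) ∈ TE := by simp [hTE]
          have m2 : s(u, w) ∈ TE := by simp [hTE]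
          have m3 : s(v, w) ∈ TE := by simp [hTE]
          have m1' : s(v, u) ∈ TE := by rw [Sym2.eq_swap]; exact m1
          have m2' : s(w, u) ∈ TE := by rw [Sym2.eq_swap]; exact m2
          have m3' : s(w, v) ∈ TE := by rw [Sym2.eq_swap]; exact m3
          rcases hx with rfl | rfl | rfl <;> rcases hy with rfl | rfl | rfl <;>
            first
              | exact (G.irrefl hxy).elim
              | assumption
        · exact absurd (Finset.mem_union_left _ (mem_cutδ.2 ⟨hedge, Or.inl ⟨hx, hy⟩⟩)) heD
        · exact absurd (Finset.mem_union_left _ (mem_cutδ.2 ⟨hedge, Or.inr ⟨hy, hx⟩⟩)) heD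
        · simp only [hf', hx, hy, if_neg, ite_false]
      · constructor
        · intro h
          exact absurd (SimpleGraph.mem_edgeFinset.1 (Finset.filter_subset _ _ h)) hxy
        · intro h
          exact absurd (SimpleGraph.mem_edgeFinset.1 (Finset.filter_subset _ _ h)) hxy
  -- D ∩ M = C
  have hDM : D ∩ M = C := by
    ext e
    constructor
    · intro he
      rw [Finset.mem_inter, hD, Finset.mem_union] at he
      rcases he with ⟨hd | hd, hm⟩
      · exact hd
      · exfalso
        simp only [hTE, Finset.mem_insert, Finset.mem_singleton] at hd
        rcases hd with rfl | rfl | rfl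
        · exact huvM hm
        · exact huwM hm
        · exact hvwM hm
    · intro he
      refine Finset.mem_inter.2 ⟨Finset.mem_union_left _ he, ?_⟩
      induction e using Sym2.inductionOn with
      | hf x y =>
        obtain ⟨hedge, hcases⟩ := mem_cutδ.1 he
        rw [hM, mem_mcSet]
        refine ⟨hedge, ?_⟩
        rcases hcases with ⟨hx, hy⟩ | ⟨hy, hx⟩
        · simp only [hf', hx, hy, if_pos, if_neg, ite_false, ite_true]
          exact fun h => hfresh y hy h.symm
        · simp only [hf', hx, hy, if_pos, if_neg, ite_false, ite_true]
          exact fun h => hfresh x hx h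
  -- D ∩ N = (C ∩ N) ∪ TE
  have hTEN : TE ⊆ N := by
    intro e he
    simp only [hTE, Finset.mem_insert, Finset.mem_singleton] at he
    rcases he with rfl | rfl | rfl
    · exact mem_mcSet.2 ⟨SimpleGraph.mem_edgeFinset.2 huv, hfuv⟩
    · exact mem_mcSet.2 ⟨SimpleGraph.mem_edgeFinset.2 huw, hfuw⟩
    · exact mem_mcSet.2 ⟨SimpleGraph.mem_edgeFinset.2 hvw, hfvw⟩
  have hDN : D ∩ N = (C ∩ N) ∪ TE := by
    rw [hD, Finset.union_inter_distrib_right]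
    congr 1
    exact Finset.inter_eq_left.2 hTEN
  have hdisj : Disjoint (C ∩ N) TE := by
    rw [Finset.disjoint_right]
    intro e he
    simp only [Finset.mem_inter, not_and]
    intro hc
    exact absurd hc (hTEC e he)
  have hTEsum : ∑ e ∈ TE, θ e = θ (s(u, v)) + θ (s(u, w)) + θ (s(v, w)) := by
    rw [hTE]
    have h12 : s(u, v) ≠ s(u, w) := by
      intro h; rcases Sym2.eq_iff.1 h with ⟨-, h2⟩ | ⟨h1, -⟩
      · exact hvwne h2
      · exact huwne h1
    have h13 : s(u, v) ≠ s(v, w) := by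
      intro h; rcases Sym2.eq_iff.1 h with ⟨h1, -⟩ | ⟨h1, -⟩
      · exact huvne h1
      · exact huwne h1
    have h23 : s(u, w) ≠ s(v, w) := by
      intro h; rcases Sym2.eq_iff.1 h with ⟨h1, -⟩ | ⟨h1, -⟩
      · exact huvne h1
      · exact huwne h1
    rw [Finset.sum_insert (by simp [h12, h13]), Finset.sum_insert (by simp [h23]),
      Finset.sum_singleton]
    ring
  have hkey := sum_diff_eq (M := M) (N := N) (C := D) θ hagree
  rw [hDM, hDN, Finset.sum_union hdisj, hTEsum] at hkey
  have hbound : ∑ e ∈ C, θ e - ∑ e ∈ C ∩ N, θ e ≤ ∑ e ∈ C, if 0 ≤ θ e then θ e else 0 := by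
    have := inter_sum_sub_le (A := C) (B := N) (C := C)
      θ (fun e => if 0 ≤ θ e then θ e else 0) ?_
    · rwa [Finset.inter_self] at this
    · intro e he
      rw [if_pos he]
      split_ifs <;> linarith
  have hfil : ∑ e ∈ C.filter (fun e => 0 ≤ θ e), θ e
      = ∑ e ∈ C, if 0 ≤ θ e then θ e else 0 := Finset.sum_filter _ _
  rw [← hfil] at hbound
  have : ∑ e ∈ M, θ e - ∑ e ∈ N, θ e ≤ 0 := by rw [hkey]; linarith
  linarith

/-- triangle criterion for multicut. -/
theorem stmt_8 (G : SimpleGraph V) [DecidableRel G.Adj] (θ : Sym2 V → ℝ)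
    (u v w : V) (huw : G.Adj u w) (huv : G.Adj u v) (hvw : G.Adj v w)
    (U : Finset V) (hU : U ⊂ Finset.univ)
    (huvU : s(u, v) ∈ cutδ G U) (huwU : s(u, w) ∈ cutδ G U)
    (W : Finset V) (hW : W ⊂ Finset.univ)
    (huwW : s(u, w) ∈ cutδ G W) (hvwW : s(v, w) ∈ cutδ G W)
    (h1 : ∑ e ∈ cutδ G U \ {s(u, w), s(u, v)}, |θ e| ≤ θ (s(u, w)) + θ (s(u, v)))
    (h2 : ∑ e ∈ cutδ G W \ {s(u, w), s(v, w)}, |θ e| ≤ θ (s(u, w)) + θ (s(v, w)))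
    (h3 : ∑ e ∈ (cutδ G {u, v, w}).filter (fun e => 0 ≤ θ e), θ e
            ≤ θ (s(u, w)) + θ (s(u, v)) + θ (s(v, w))) :
    ∃ M, IsMulticut G M ∧
      (∀ N, IsMulticut G N → ∑ e ∈ M, θ e ≤ ∑ e ∈ N, θ e) ∧ s(u, w) ∉ M := by
  classical
  obtain ⟨N, hNmem, hNopt⟩ := Finset.exists_min_image
    ((Finset.univ : Finset (Finset (Sym2 V))).filter (fun M => IsMulticut G M))
    (fun M => ∑ e ∈ M, θ e)
    ⟨mcSet G (fun _ => u), Finset.mem_filter.2 ⟨Finset.mem_univ _, isMulticut_mcSet G _⟩⟩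
  have hNmc : IsMulticut G N := (Finset.mem_filter.1 hNmem).2
  have hopt : ∀ N', IsMulticut G N' → ∑ e ∈ N, θ e ≤ ∑ e ∈ N', θ e := fun N' h =>
    hNopt N' (Finset.mem_filter.2 ⟨Finset.mem_univ _, h⟩)
  by_cases huwN : s(u, w) ∈ N
  · obtain ⟨hNsub, f, hf⟩ := hNmc
    have hNeq : N = mcSet G f := eq_mcSet hNsub hf
    have hfuw : f u ≠ f w := (hf u w huw).1 huwN
    -- helper to conclude from a move
    have finish : ∀ M, IsMulticut G M → (∑ e ∈ M, θ e ≤ ∑ e ∈ mcSet G f, θ e) →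
        s(u, w) ∉ M →
        ∃ M, IsMulticut G M ∧
          (∀ N', IsMulticut G N' → ∑ e ∈ M, θ e ≤ ∑ e ∈ N', θ e) ∧ s(u, w) ∉ M := by
      intro M hMmc hMle hMuw
      refine ⟨M, hMmc, fun N' hN' => ?_, hMuw⟩
      calc ∑ e ∈ M, θ e ≤ ∑ e ∈ mcSet G f, θ e := hMle
        _ = ∑ e ∈ N, θ e := by rw [hNeq]
        _ ≤ ∑ e ∈ N', θ e := hopt N' hN'
    by_cases hfvw : f v = f w
    · -- U-move: a = u, b = w, c = v
      have hfbc : f w = f v := hfvw.symm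
      rcases (mem_cutδ.1 huwU).2 with ⟨huU, hwU⟩ | ⟨hwU, huU⟩
      · have hvU : v ∉ U := by
          rcases (mem_cutδ.1 huvU).2 with ⟨-, h⟩ | ⟨-, h⟩
          · exact h
          · exact absurd huU h
        obtain ⟨M, hMmc, hMle, hMuw⟩ := move_swap G θ f u w v huw huv
          (fun h => hvw.ne h.symm) U huU hwU hvU hfbc hfuw h1
        exact finish M hMmc hMle hMuw
      · -- use Uᶜ
        have hvU : v ∈ U := by
          rcases (mem_cutδ.1 huvU).2 with ⟨h, -⟩ | ⟨h, -⟩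
          · exact absurd h huU
          · exact h
        obtain ⟨M, hMmc, hMle, hMuw⟩ := move_swap G θ f u w v huw huv
          (fun h => hvw.ne h.symm) Uᶜ (Finset.mem_compl.2 huU)
          (by simp [hwU]) (by simp [hvU]) hfbc hfuw (by rw [cutδ_compl]; exact h1)
        exact finish M hMmc hMle hMuw
    · by_cases hfuv : f u = f v
      · -- W-move: a = w, b = u, c = v
        have h2' : ∑ e ∈ cutδ G W \ {s(w, u), s(w, v)}, |θ e| ≤ θ (s(w, u)) + θ (s(w, v)) := by
          rw [show s(w, u) = s(u, w) from Sym2.eq_swap,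
            show s(w, v) = s(v, w) from Sym2.eq_swap]
          exact h2
        have hfab : f w ≠ f u := fun h => hfuw h.symm
        rcases (mem_cutδ.1 huwW).2 with ⟨huW, hwW⟩ | ⟨hwW, huW⟩
        · -- w ∉ W, u ∈ W: use Wᶜ
          have hvW : v ∈ W := by
            rcases (mem_cutδ.1 hvwW).2 with ⟨h, -⟩ | ⟨h, -⟩
            · exact h
            · exact absurd h hwW
          obtain ⟨M, hMmc, hMle, hMuw⟩ := move_swap G θ f w u v huw.symm hvw.symm
            huv.ne Wᶜ (Finset.mem_compl.2 hwW) (by simp [huW]) (by simp [hvW])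
            hfuv hfab (by rw [cutδ_compl]; exact h2')
          refine finish M hMmc hMle ?_
          rwa [show s(u, w) = s(w, u) from Sym2.eq_swap]
        · -- w ∈ W, u ∉ W
          have hvW : v ∉ W := by
            rcases (mem_cutδ.1 hvwW).2 with ⟨-, h⟩ | ⟨-, h⟩
            · exact absurd hwW h
            · exact h
          obtain ⟨M, hMmc, hMle, hMuw⟩ := move_swap G θ f w u v huw.symm hvw.symm
            huv.ne W hwW huW hvW hfuv hfab h2'
          refine finish M hMmc hMle ?_
          rwa [show s(u, w) = s(w, u) from Sym2.eq_swap]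
      · -- all three cut: merge move
        obtain ⟨M, hMmc, hMle, hMuw⟩ := move_merge G θ f u v w huw huv hvw hfuv hfuw hfvw h3
        exact finish M hMmc hMle hMuw
  · exact ⟨N, hNmc, hopt, huwN⟩
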